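/- arXiv:math/0305080 — 4 statements merged into one kernel-verified Lean document; each statement's English description precedes it below -/
import Mathlib

section
/- For every x ∈ (0, 1/2), (1/(2π)) log cos(2π(x − x²)) < −x², i.e., cos(2π(x−x²)) < exp(−2π x²). -/
/-!
With `θ = 2π(x − x²) ∈ (0, π/2)` and `t = 2πx² ∈ (0, π/2)` the claim is `cos θ < exp (-t)`.
Bound `cos θ` above by its quartic Taylor polynomial and `exp (-t)` below by `(1 - t/3)³`;
the gap between the two is `πx²` times a polynomial in `x` and `π`, which stays positive for
`x ∈ (0, 1/2)` and `π ∈ (3.14, 3.15)`.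
-/

open Real Set

namespace Real

theorem cos_le_one_sub_sq_div_two_add_pow_four_div (x : ℝ) :
    cos x ≤ 1 - x ^ 2 / 2 + x ^ 4 / 24 := by
  suffices h : ∀ y, 0 ≤ y → cos y ≤ 1 - y ^ 2 / 2 + y ^ 4 / 24 by
    simpa only [cos_abs, sq_abs, Even.pow_abs (by decide : Even 4)] using h |x| (abs_nonneg x)
  have hmono : MonotoneOn (fun y ↦ 1 - y ^ 2 / 2 + y ^ 4 / 24 - cos y) (Ici 0) := by
    refine monotoneOn_of_hasDerivWithinAt_nonneg (f' := fun y ↦ -y + y ^ 3 / 6 + sin y)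
      (convex_Ici 0) (by fun_prop) (fun y _ ↦ ?_) (fun y hy ↦ ?_)
    · exact HasDerivAt.hasDerivWithinAt <|
        (((hasDerivAt_pow 2 y).div_const 2).const_sub 1 |>.add
          ((hasDerivAt_pow 4 y).div_const 24) |>.sub (hasDerivAt_cos y)).congr_deriv (by ring)
    · rw [interior_Ici] at hy
      linarith [sin_ge_sub_cube hy.le]
  intro y hy
  simpa [sub_nonneg] using hmono self_mem_Ici hy hy

end Real

lemma quartic_cos_bound_lt_cubic_exp_bound {x : ℝ} (hx₀ : 0 < x) (hx₁ : x < 1 / 2) :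
    1 - (2 * π * (x - x ^ 2)) ^ 2 / 2 + (2 * π * (x - x ^ 2)) ^ 4 / 24
      < (1 - 2 * π * x ^ 2 / 3) ^ 3 := by
  have hfactor : (1 - 2 * π * x ^ 2 / 3) ^ 3
      - (1 - (2 * π * (x - x ^ 2)) ^ 2 / 2 + (2 * π * (x - x ^ 2)) ^ 4 / 24)
      = π * x ^ 2 * (-2 + 4 / 3 * π * x ^ 2 - 8 / 27 * π ^ 2 * x ^ 4 + 2 * π * (1 - x) ^ 2
        - 2 / 3 * π ^ 3 * x ^ 2 * (1 - x) ^ 4) := by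
    ring
  -- π enters the cofactor with positive coefficients in degree 1 and negative ones in degrees
  -- 2 and 3, so replacing it by 3.14 and 3.15 respectively only makes the cofactor smaller.
  have hnum : 0 < -2 + 4 / 3 * 3.14 * x ^ 2 - 8 / 27 * 3.15 ^ 2 * x ^ 4 + 2 * 3.14 * (1 - x) ^ 2
      - 2 / 3 * 3.15 ^ 3 * x ^ 2 * (1 - x) ^ 4 := by
    nlinarith [mul_pos hx₀ hx₀, mul_pos hx₀ (sub_pos.2 hx₁), pow_pos hx₀ 3, pow_pos hx₀ 4,
      mul_pos (mul_pos hx₀ hx₀) (sub_pos.2 hx₁)]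
  have hcofactor : 0 < -2 + 4 / 3 * π * x ^ 2 - 8 / 27 * π ^ 2 * x ^ 4 + 2 * π * (1 - x) ^ 2
      - 2 / 3 * π ^ 3 * x ^ 2 * (1 - x) ^ 4 := by
    have h₁ : 3.14 < π := pi_gt_d2
    have h₂ : π ^ 2 < 3.15 ^ 2 := by gcongr; exact pi_lt_d2
    have h₃ : π ^ 3 < 3.15 ^ 3 := by gcongr; exact pi_lt_d2
    nlinarith [mul_le_mul_of_nonneg_right h₁.le (sq_nonneg x),
      mul_le_mul_of_nonneg_right h₁.le (sq_nonneg (1 - x)),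
      mul_le_mul_of_nonneg_right h₂.le (by positivity : (0 : ℝ) ≤ x ^ 4),
      mul_le_mul_of_nonneg_right h₃.le (by positivity : (0 : ℝ) ≤ x ^ 2 * (1 - x) ^ 4)]
  linarith [mul_pos (mul_pos pi_pos (pow_pos hx₀ 2)) hcofactor]

open Real in
/-- For every `x ∈ (0, 1/2)`, `(1/(2π)) log cos(2π(x − x²)) < −x²`. -/
theorem log_cos_lt (x : ℝ) (hx : x ∈ Set.Ioo (0 : ℝ) (1/2)) :
    (1 / (2 * π)) * Real.log (Real.cos (2 * π * (x - x^2))) < -x^2 := by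
  obtain ⟨hx₀, hx₁⟩ := hx
  have hθ : 2 * π * (x - x ^ 2) ∈ Ioo (-(π / 2)) (π / 2) := by
    have : 0 < π * (x - 1 / 2) ^ 2 := mul_pos pi_pos (by nlinarith)
    constructor <;> nlinarith [pi_pos, mul_pos hx₀ (sub_pos.2 hx₁)]
  have ht : 2 * π * x ^ 2 ≤ (3 : ℕ) := by
    push_cast
    nlinarith [pi_lt_d2, mul_pos hx₀ (sub_pos.2 hx₁)]
  rw [one_div_mul_eq_div, div_lt_iff₀ (by positivity), log_lt_iff_lt_exp (cos_pos_of_mem_Ioo hθ)]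
  calc cos (2 * π * (x - x ^ 2))
      ≤ 1 - (2 * π * (x - x ^ 2)) ^ 2 / 2 + (2 * π * (x - x ^ 2)) ^ 4 / 24 :=
        cos_le_one_sub_sq_div_two_add_pow_four_div _
    _ < (1 - 2 * π * x ^ 2 / 3) ^ 3 := quartic_cos_bound_lt_cubic_exp_bound hx₀ hx₁
    _ ≤ exp (-(2 * π * x ^ 2)) := by exact_mod_cast one_sub_div_pow_le_exp_neg ht
    _ = exp (-x ^ 2 * (2 * π)) := by ring_nf
end

section
/- For every u ∈ (0, 1/2), tan(2π u²) < 2u/(1 − 2u). -/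
open Real in
/-- For every `u ∈ (0, 1/2)`, `tan(2π u²) < 2u/(1 − 2u)`. -/
theorem tan_lt (u : ℝ) (hu : u ∈ Set.Ioo (0 : ℝ) (1/2)) :
    Real.tan (2 * π * u^2) < 2 * u / (1 - 2 * u) := by
  obtain ⟨hu0, hu1⟩ := hu
  have hpi := Real.pi_pos
  have hpil : π < 3.15 := Real.pi_lt_d2
  have hx0 : 0 < 2 * π * u^2 := by positivity
  have hu2 : u^2 < 1/4 := by nlinarith
  have hx2 : 2 * π * u^2 ≤ π / 2 := by nlinarith [mul_lt_mul_of_pos_left hu2 hpi]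
  have hkey : 2 / π * (2 * π * u^2) = 4 * u^2 := by
    field_simp; ring
  have hcos : 1 - 4 * u^2 ≤ Real.cos (2 * π * u^2) := by
    have h := Real.one_sub_mul_le_cos hx0.le hx2
    rw [hkey] at h; linarith
  have hcospos : 0 < Real.cos (2 * π * u^2) := by nlinarith
  have hsin : Real.sin (2 * π * u^2) < 2 * π * u^2 := Real.sin_lt hx0
  rw [Real.tan_eq_sin_div_cos, div_lt_div_iff₀ hcospos (by linarith)]
  have h1 : Real.sin (2*π*u^2) * (1-2*u) < (2*π*u^2) * (1-2*u) :=
    mul_lt_mul_of_pos_right hsin (by linarith)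
  have h2 : 2*u*(1-4*u^2) ≤ 2*u*Real.cos (2*π*u^2) :=
    mul_le_mul_of_nonneg_left hcos (by linarith)
  have h3 : 0 ≤ 2*u*(1-2*u)*(1+2*u-π*u) := by
    have : π*u < 1 + 2*u := by nlinarith
    have h2u : 0 < 1-2*u := by linarith
    exact mul_nonneg (mul_nonneg (by linarith) h2u.le) (by linarith)
  nlinarith [h1, h2, h3]
end

section
/- Let p/q and p'/q' be rationals with 2 ≤ q' < q. If a complex number α lies in the closed disk of radius (log 2)/(2π q') tangent to the real axis at p'/q' (from below), then |α − p/q| > 1/q³. -/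
/-!
The disk has radius `r` and centre `p'/q' - i r`, so the triangle inequality through the centre
gives `|α - p/q| ≥ √((p'/q' - p/q)² + r²) - r`. As `p/q` is in lowest terms and `q > q'`, the two
fractions differ, whence `|p'/q' - p/q| ≥ 1/(q q')`. It remains to check
`1/q⁶ + 2r/q³ < 1/(q q')²`, which holds for every radius with `2 r q' < 1`; here
`2 r q' = log 2 / π`.
-/

open Complex

theorem lt_norm_sub_of_mem_closedBall_sub_mul_I {x y r ε : ℝ} {z : ℂ}
    (hz : z ∈ Metric.closedBall ((x : ℂ) - r * I) r) (hε : 0 ≤ ε)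
    (h : ε ^ 2 + 2 * ε * r < (x - y) ^ 2) :
    ε < ‖z - y‖ := by
  have hr : 0 ≤ r := Metric.nonempty_closedBall.mp ⟨z, hz⟩
  have hcenter : ‖(x : ℂ) - r * I - y‖ = √((x - y) ^ 2 + (-r) ^ 2) := by
    rw [← Complex.norm_add_mul_I]
    push_cast
    ring_nf
  have hfar : ε + r < ‖(x : ℂ) - r * I - y‖ := by
    rw [hcenter]
    exact Real.lt_sqrt (by positivity) |>.mpr (by nlinarith)
  have htri : ‖(x : ℂ) - r * I - y‖ ≤ dist z ((x : ℂ) - r * I) + ‖z - y‖ := by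
    rw [dist_comm, ← Complex.dist_eq, ← Complex.dist_eq]
    exact dist_triangle _ z _
  linarith [Metric.mem_closedBall.mp hz]

theorem one_div_mul_le_abs_div_sub_div {a b : ℤ} {m n : ℕ} (hm : 0 < m) (hn : 0 < n)
    (hab : a * n ≠ b * m) :
    1 / ((m : ℝ) * n) ≤ |(a : ℝ) / m - b / n| := by
  have hnum : (1 : ℝ) ≤ |((a * n - b * m : ℤ) : ℝ)| := by
    exact_mod_cast Int.one_le_abs (sub_ne_zero.mpr hab)
  have hdiff : (a : ℝ) / m - b / n = ((a * n - b * m : ℤ) : ℝ) / (m * n) := by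
    push_cast
    field_simp
  rw [hdiff, abs_div, abs_of_nonneg (by positivity : (0 : ℝ) ≤ m * n)]
  gcongr

theorem mul_ne_mul_of_gcd_eq_one_of_lt {p p' : ℤ} {q q' : ℕ} (hpq : Int.gcd p q = 1)
    (hq' : 0 < q') (hq'q : q' < q) :
    p' * q ≠ p * q' := by
  intro h
  have hdvd : (q : ℤ) ∣ p * q' := ⟨p', by linarith⟩
  have hle : (q : ℤ) ≤ q' := Int.le_of_dvd (by omega) <|
    Int.dvd_of_dvd_mul_right_of_gcd_one hdvd (by rwa [Int.gcd_comm])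
  omega

theorem sq_add_two_mul_lt_sq_of_two_mul_mul_lt_one {q q' r : ℝ} (hq' : 0 < q')
    (hq'q : q' + 1 ≤ q) (hr : 2 * r * q' < 1) :
    (1 / q ^ 3) ^ 2 + 2 * (1 / q ^ 3) * r < (1 / (q * q')) ^ 2 := by
  have hq : 1 < q := by linarith
  have hsq : q' ^ 2 < q ^ 3 := by nlinarith [pow_lt_pow_right₀ hq (show 2 < 3 by norm_num)]
  have hlin : 2 * r * q' * (q' * q ^ 3) < 1 * (q' * q ^ 3) :=
    mul_lt_mul_of_pos_right hr (by positivity)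
  have key : q' ^ 2 + 2 * r * q' ^ 2 * q ^ 3 < q ^ 4 := by nlinarith
  have hlhs : (1 / q ^ 3) ^ 2 + 2 * (1 / q ^ 3) * r
      = (q' ^ 2 + 2 * r * q' ^ 2 * q ^ 3) / (q ^ 6 * q' ^ 2) := by
    field_simp
  have hrhs : (1 / (q * q')) ^ 2 = q ^ 4 / (q ^ 6 * q' ^ 2) := by
    field_simp
  rw [hlhs, hrhs]
  exact div_lt_div_of_pos_right key (by positivity)

open Real Complex in
theorem yoccoz_disk_estimate_general (p p' : ℤ) (q q' : ℕ)
    (hpq : Int.gcd p q = 1)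
    (hq' : 2 ≤ q') (hq'q : q' < q)
    (α : ℂ)
    (hα : α ∈ Metric.closedBall
      ((p' : ℂ) / (q' : ℂ) - (Real.log 2 / (2 * π * q')) * Complex.I)
      (Real.log 2 / (2 * π * q'))) :
    1 / (q : ℝ)^3 < ‖α - (p : ℂ) / (q : ℂ)‖ := by
  have hq'0 : 0 < q' := by omega
  have hball : α ∈ Metric.closedBall
      (((p' / q' : ℝ) : ℂ) - ((Real.log 2 / (2 * π * q') : ℝ) : ℂ) * I)
      (Real.log 2 / (2 * π * q')) := by
    convert hα using 2
    push_cast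
    ring
  have hradius : 2 * (Real.log 2 / (2 * π * q')) * q' < 1 := by
    have hlog : Real.log 2 < π := by
      linarith [Real.log_lt_sub_one_of_pos two_pos (by norm_num), pi_gt_three]
    rw [show 2 * (Real.log 2 / (2 * π * q')) * q' = Real.log 2 / π by field_simp]
    exact (div_lt_one pi_pos).mpr hlog
  have hsep : 1 / ((q : ℝ) * q') ≤ |(p' : ℝ) / q' - p / q| := by
    rw [mul_comm]
    exact one_div_mul_le_abs_div_sub_div hq'0 (by omega)
      (mul_ne_mul_of_gcd_eq_one_of_lt hpq hq'0 hq'q)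
  have hclose := sq_add_two_mul_lt_sq_of_two_mul_mul_lt_one (q := q) (q' := q')
    (by positivity) (by exact_mod_cast hq'q) hradius
  have hdist := lt_norm_sub_of_mem_closedBall_sub_mul_I (y := p / q) hball (by positivity)
    (hclose.trans_le <| (pow_le_pow_left₀ (by positivity) hsep 2).trans_eq (sq_abs _))
  simpa using hdist

open Real Complex in
/-- Let `p/q` and `p'/q'` be rationals (in lowest terms) with `2 ≤ q' < q`.
If a complex number `α` lies in the closed disk of radius `log 2/(2π q')`
tangent to the real axis at `p'/q'` from below (i.e. the closed disk centered
at `p'/q' − i r` of radius `r = log 2/(2π q')`), then `|α − p/q| > 1/q³`. -/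
theorem yoccoz_disk_estimate (p p' : ℤ) (q q' : ℕ)
    (hpq : Int.gcd p q = 1) (hpq' : Int.gcd p' q' = 1)
    (hq' : 2 ≤ q') (hq'q : q' < q)
    (α : ℂ)
    (hα : α ∈ Metric.closedBall
      ((p' : ℂ) / (q' : ℂ) - (Real.log 2 / (2 * π * q')) * Complex.I)
      (Real.log 2 / (2 * π * q'))) :
    1 / (q : ℝ)^3 < ‖α - (p : ℂ) / (q : ℂ)‖ :=
  yoccoz_disk_estimate_general p p' q q' hpq hq' hq'q α hα
end

section
/- Let α ∈ (0,1/2) be irrational with approximants p_n/q_n, let 𝒩 = {n ≥ 1 : q_{n+1} > 2 q_n²} with elements n_1 < n_2 < …, and for i ≥ 1 let B_i = B(p_{n_i}/q_{n_i}, 1/q_{n_i}³) and D_i = B(p_{n_i}/q_{n_i}, 1/q_{n_i}²) (disks in ℂ). Then α ∈ B_i for all i ≥ 1, and the closed disk D_{i+1} is contained in B_i \ {p_{n_i}/q_{n_i}} for all i ≥ 1. -/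
/-! With `m = n_i`, `M = n_{i+1}` and `δ = |α - p_m/q_m|`, the classical bounds
`1/(2 q_m q_{m+1}) < δ ≤ 1/(q_m q_{m+1})` (the lower one because the next complete quotient is
below `a_{m+1} + 1`) and `q_{m+1} > 2 q_m²` give `2δ < 1/q_m³`, so `α ∈ B_i`. Since
`q_M ≥ q_{m+1}` and `q_{M+1} > 2 q_M²`, every point of `D_{i+1}` is within
`1/(q_M q_{M+1}) + 1/q_M² < 1/(2 q_m q_{m+1}) < δ` of `α`: it is not the centre of `B_i`, and it
lies within `2δ < 1/q_m³` of that centre. -/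

open Metric
open GenContFract (of)

namespace GenContFract

variable {K : Type*} [Field K] [LinearOrder K] [FloorRing K] {v : K} {n : ℕ}

theorem of_den_succ_eq {gp : Pair K} (hs : (of v).s.get? n = some gp) :
    (of v).dens (n + 1) = ((of v).contsAux n).b + gp.b * (of v).dens n := by
  have ha : gp.a = 1 := of_partNum_eq_one (partNum_eq_s_a hs)
  rw [den_eq_conts_b, nth_cont_eq_succ_nth_contAux, contsAux_recurrence hs rfl rfl,
    den_eq_conts_b, nth_cont_eq_succ_nth_contAux, ha]
  dsimp only
  ring

variable [IsStrictOrderedRing K]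

theorem of_dens_monotone : Monotone (of v).dens :=
  monotone_nat_of_le_succ fun _ ↦ of_den_mono

theorem one_le_of_den : 1 ≤ (of v).dens n :=
  zeroth_den_eq_one.ge.trans <| of_dens_monotone (Nat.zero_le n)

/-- `|v - Aₙ/Bₙ| = 1 / (Bₙ (ξ Bₙ + Bₙ₋₁))` with `ξ = ifp.fr⁻¹` the next complete quotient;
`((of v).contsAux n).b` is `Bₙ₋₁`. -/
theorem abs_sub_convs_eq {ifp : IntFractPair K} (hs : IntFractPair.stream v n = some ifp)
    (hfr : ifp.fr ≠ 0) :
    |v - (of v).convs n| =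
      1 / ((of v).dens n * (ifp.fr⁻¹ * (of v).dens n + ((of v).contsAux n).b)) := by
  have hB : ((of v).contsAux (n + 1)).b = (of v).dens n := by
    rw [den_eq_conts_b, nth_cont_eq_succ_nth_contAux]
  have : 0 < ifp.fr := (IntFractPair.nth_stream_fr_nonneg hs).lt_of_ne' hfr
  have : 0 ≤ ((of v).contsAux n).b := zero_le_of_contsAux_b
  have : 1 ≤ (of v).dens n := one_le_of_den
  rw [sub_convs_eq hs, if_neg hfr, hB, abs_div, abs_neg_one_pow, abs_of_pos (by positivity)]

theorem lt_abs_sub_convs (hn : ¬(of v).TerminatedAt n) :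
    1 / (2 * (of v).dens n * (of v).dens (n + 1)) < |v - (of v).convs n| := by
  obtain ⟨gp, hgp⟩ : ∃ gp, (of v).s.get? n = some gp := Option.ne_none_iff_exists'.1 hn
  obtain ⟨_, hs', hb⟩ := IntFractPair.exists_succ_get?_stream_of_gcf_of_get?_eq_some hgp
  obtain ⟨ifp, hs, hfr, rfl⟩ := IntFractPair.succ_nth_stream_eq_some_iff.1 hs'
  have hfr_inv : ifp.fr⁻¹ < gp.b + 1 := hb ▸ Int.lt_floor_add_one _
  have hB : 1 ≤ (of v).dens n := one_le_of_den
  have hB' : (of v).dens n ≤ (of v).dens (n + 1) := of_den_mono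
  rw [abs_sub_convs_eq hs hfr]
  have : 0 < ifp.fr := (IntFractPair.nth_stream_fr_nonneg hs).lt_of_ne' hfr
  have : 0 ≤ ((of v).contsAux n).b := zero_le_of_contsAux_b
  apply one_div_lt_one_div_of_lt (by positivity)
  calc (of v).dens n * (ifp.fr⁻¹ * (of v).dens n + ((of v).contsAux n).b)
      < (of v).dens n * ((gp.b + 1) * (of v).dens n + ((of v).contsAux n).b) := by gcongr
    _ = (of v).dens n * ((of v).dens (n + 1) + (of v).dens n) := by
        rw [of_den_succ_eq hgp]; ring
    _ ≤ 2 * (of v).dens n * (of v).dens (n + 1) := by nlinarith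

theorem two_le_of_den_of_pos_of_le_half (h0 : 0 < v) (h1 : v ≤ 1 / 2) (hn : 1 ≤ n) :
    2 ≤ (of v).dens n := by
  have hfract : Int.fract v = v := Int.fract_eq_self.2 ⟨h0.le, by linarith⟩
  have hs : (of v).s.get? 0 = some ⟨1, (⌊v⁻¹⌋ : K)⟩ := by
    have := of_s_head (v := v) (by rw [hfract]; exact h0.ne')
    rwa [hfract] at this
  have h2 : (2 : ℤ) ≤ ⌊v⁻¹⌋ := Int.le_floor.2 <| by
    rw [Int.cast_ofNat, le_inv_comm₀ two_pos h0, ← one_div]; exact h1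
  calc (2 : K) ≤ ⌊v⁻¹⌋ := by exact_mod_cast h2
    _ = (of v).dens 1 := (first_den_eq hs).symm
    _ ≤ (of v).dens n := of_dens_monotone hn

theorem not_terminatedAt_of_irrational {v : ℝ} (hv : Irrational v) (n : ℕ) :
    ¬(of v).TerminatedAt n := fun h ↦
  let ⟨q, hq⟩ := (terminates_iff_rat v).1 ⟨n, h⟩
  hv.ne_rat q hq

end GenContFract

open GenContFract

theorem Metric.closedBall_subset_ball_diff_singleton {X : Type*} [PseudoMetricSpace X]
    {x y z : X} {r R : ℝ} (h : dist x z + r < dist x y) (hR : 2 * dist x y ≤ R) :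
    closedBall z r ⊆ ball y R \ {y} := by
  intro w hw
  rw [mem_closedBall] at hw
  refine ⟨?_, fun hwy ↦ ?_⟩
  · calc dist w y ≤ dist w z + dist z x + dist x y := dist_triangle4 _ _ _ _
      _ < 2 * dist x y := by rw [dist_comm z]; linarith
      _ ≤ R := hR
  · rw [Set.mem_singleton_iff.1 hwy] at hw
    linarith [dist_triangle x z y, dist_comm z y]

theorem one_div_mul_add_one_div_sq_lt {K : Type*} [Field K] [LinearOrder K]
    [IsStrictOrderedRing K] {a b c d : K} (ha : 2 ≤ a) (hab : 2 * a ^ 2 < b) (hbc : b ≤ c)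
    (hcd : 2 * c ^ 2 < d) : 1 / (c * d) + 1 / c ^ 2 < 1 / (2 * a * b) := by
  have hb : 0 < b := by nlinarith
  have hc : 1 ≤ c := by nlinarith
  have hcd' : c ^ 2 < c * d := by nlinarith
  have hc2 : 4 * (a * b) < c ^ 2 := by nlinarith
  calc 1 / (c * d) + 1 / c ^ 2 < 1 / c ^ 2 + 1 / c ^ 2 := by gcongr
    _ = 2 / c ^ 2 := by ring
    _ < 2 / (4 * (a * b)) := by gcongr
    _ = 1 / (2 * a * b) := by field_simp; ring

theorem Metric.mem_ball_and_closedBall_subset_ball_diff_singleton {X : Type*}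
    [PseudoMetricSpace X] {x y z : X} {a b c d : ℝ} (ha : 2 ≤ a) (hab : 2 * a ^ 2 < b)
    (hbc : b ≤ c) (hcd : 2 * c ^ 2 < d) (hxy : 1 / (2 * a * b) < dist x y)
    (hxy' : dist x y ≤ 1 / (a * b)) (hxz : dist x z ≤ 1 / (c * d)) :
    x ∈ ball y (1 / a ^ 3) ∧ closedBall z (1 / c ^ 2) ⊆ ball y (1 / a ^ 3) \ {y} := by
  have hb : 0 < b := by nlinarith
  have hR : 2 * dist x y ≤ 1 / a ^ 3 :=
    calc 2 * dist x y ≤ 2 * (1 / (a * b)) := by gcongr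
      _ ≤ 1 / a ^ 3 := by
        rw [mul_one_div, div_le_div_iff₀ (by positivity) (by positivity)]; nlinarith
  have hpos : 0 < dist x y := lt_trans (by positivity) hxy
  refine ⟨mem_ball.2 ((lt_two_mul_self hpos).trans_le hR),
    closedBall_subset_ball_diff_singleton ?_ hR⟩
  calc dist x z + 1 / c ^ 2 ≤ 1 / (c * d) + 1 / c ^ 2 := by gcongr
    _ < 1 / (2 * a * b) := one_div_mul_add_one_div_sq_lt ha hab hbc hcd
    _ < dist x y := hxy

theorem good_approximants_general (α : ℝ) (hα : Irrational α)
    (h : α ∈ Set.Ioo (0 : ℝ) (1/2))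
    (q : ℕ → ℝ) (p : ℕ → ℝ)
    (hq : ∀ n, q n = (GenContFract.of α).dens n)
    (hp : ∀ n, p n = (GenContFract.of α).nums n)
    (nn : ℕ → ℕ) (hmono : StrictMono nn)
    (hmem : ∀ i : ℕ, 1 ≤ nn i ∧ 2 * (q (nn i))^2 < q (nn i + 1)) :
    ∀ i : ℕ,
      (α : ℂ) ∈ ball ((p (nn i) / q (nn i) : ℝ) : ℂ) (1 / (q (nn i))^3) ∧
      closedBall ((p (nn (i+1)) / q (nn (i+1)) : ℝ) : ℂ) (1 / (q (nn (i+1)))^2) ⊆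
        ball ((p (nn i) / q (nn i) : ℝ) : ℂ) (1 / (q (nn i))^3) \
          {((p (nn i) / q (nn i) : ℝ) : ℂ)} := by
  have hdist n : dist (α : ℂ) ((p n / q n : ℝ) : ℂ) = |α - (of α).convs n| := by
    rw [Complex.isometry_ofReal.dist_eq, Real.dist_eq, hp, hq, conv_eq_num_div_den]
  have hlower n : 1 / (2 * q n * q (n + 1)) < dist (α : ℂ) ((p n / q n : ℝ) : ℂ) := by
    rw [hdist, hq, hq]; exact lt_abs_sub_convs (not_terminatedAt_of_irrational hα n)
  have hupper n : dist (α : ℂ) ((p n / q n : ℝ) : ℂ) ≤ 1 / (q n * q (n + 1)) := by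
    rw [hdist, hq, hq]; exact abs_sub_convs_le (not_terminatedAt_of_irrational hα n)
  have htwo n (hn : 1 ≤ n) : 2 ≤ q n :=
    hq n ▸ two_le_of_den_of_pos_of_le_half h.1 h.2.le hn
  intro i
  obtain ⟨hm, hm_gap⟩ := hmem i
  obtain ⟨-, hM_gap⟩ := hmem (i + 1)
  have hbc : q (nn i + 1) ≤ q (nn (i + 1)) := by
    rw [hq, hq]; exact of_dens_monotone (hmono i.lt_succ_self)
  exact mem_ball_and_closedBall_subset_ball_diff_singleton (htwo _ hm) hm_gap hbc hM_gap
    (hlower _) (hupper _) (hupper _)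

/-- Let `α ∈ (0,1/2)` be irrational with approximants `pₙ/qₙ`, let
`𝒩 = {n ≥ 1 : q_{n+1} > 2 qₙ²}` be enumerated increasingly by `nn`, and for
each `i` let `Bᵢ = B(p_{nᵢ}/q_{nᵢ}, 1/q_{nᵢ}³)` and
`Dᵢ = B(p_{nᵢ}/q_{nᵢ}, 1/q_{nᵢ}²)` be disks in `ℂ`. Then `α ∈ Bᵢ` for all `i`,
and the closed disk `D_{i+1}` is contained in `Bᵢ \ {p_{nᵢ}/q_{nᵢ}}`. -/
theorem good_approximants (α : ℝ) (hα : Irrational α)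
    (h : α ∈ Set.Ioo (0 : ℝ) (1/2))
    (q : ℕ → ℝ) (p : ℕ → ℝ)
    (hq : ∀ n, q n = (GenContFract.of α).dens n)
    (hp : ∀ n, p n = (GenContFract.of α).nums n)
    (nn : ℕ → ℕ) (hmono : StrictMono nn)
    (hmem : ∀ i : ℕ, 1 ≤ nn i ∧ 2 * (q (nn i))^2 < q (nn i + 1))
    (hall : ∀ m : ℕ, 1 ≤ m → 2 * (q m)^2 < q (m + 1) → ∃ i : ℕ, nn i = m) :
    ∀ i : ℕ,
      (α : ℂ) ∈ ball ((p (nn i) / q (nn i) : ℝ) : ℂ) (1 / (q (nn i))^3) ∧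
      closedBall ((p (nn (i+1)) / q (nn (i+1)) : ℝ) : ℂ) (1 / (q (nn (i+1)))^2) ⊆
        ball ((p (nn i) / q (nn i) : ℝ) : ℂ) (1 / (q (nn i))^3) \
          {((p (nn i) / q (nn i) : ℝ) : ℂ)} :=
  good_approximants_general α hα h q p hq hp nn hmono hmem
end
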